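/- arXiv:0710.3989 — 4 statements merged into one kernel-verified Lean document; each statement's English description precedes it below -/
import Mathlib

section
/- Let f : ℝ → ℝ be a C¹ diffeomorphism of [0,1] fixing exactly 0 and 1, with f(x) < x for all x ∈ (0,1). Suppose f has the unbounded distortion property: for all x, y ∈ (0,1) not on the same f-orbit, limsup_{n→∞} |log (fⁿ)'(x) − log (fⁿ)'(y)| = ∞. Then any C¹ diffeomorphism g of [0,1] commuting with f maps each point x ∈ (0,1) to a point on the f-orbit of x. -/
open Set Filter

/-- For a C¹ diffeomorphism of `ℝ` (with C¹ inverse), the derivative never vanishes. -/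
lemma aux_deriv_ne_zero (F : ℝ ≃ ℝ) (h1 : ContDiff ℝ 1 ⇑F) (h2 : ContDiff ℝ 1 ⇑F.symm)
    (x : ℝ) : deriv F x ≠ 0 := by
  have hF := (h1.differentiable one_ne_zero x).hasDerivAt
  have hS := ((h2.differentiable one_ne_zero) (F x)).hasDerivAt
  have hcomp := hS.comp x hF
  have hid : (⇑F.symm ∘ ⇑F) = id := funext F.symm_apply_apply
  rw [hid] at hcomp
  have h1' : deriv (⇑F.symm) (F x) * deriv (⇑F) x = 1 := hcomp.unique (hasDerivAt_id x)
  intro h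
  rw [h, mul_zero] at h1'
  exact zero_ne_one h1'

/-- Iterates of a differentiable function with nonvanishing derivative are
differentiable with nonvanishing derivative. -/
lemma aux_iterate (F : ℝ → ℝ) (hF : Differentiable ℝ F) (hne : ∀ x, deriv F x ≠ 0) (n : ℕ) :
    Differentiable ℝ (F^[n]) ∧ ∀ x, deriv (F^[n]) x ≠ 0 := by
  induction n with
  | zero =>
    simp only [Function.iterate_zero]
    exact ⟨differentiable_id, fun x => by simp⟩
  | succ n ih =>
    have heq : F^[n + 1] = F ∘ F^[n] := Function.iterate_succ' F n
    constructor
    · rw [heq]; exact hF.comp ih.1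
    · intro x
      have h1 := (hF (F^[n] x)).hasDerivAt
      have h2 := (ih.1 x).hasDerivAt
      have hc := h1.comp x h2
      rw [← heq] at hc
      rw [hc.deriv]
      exact mul_ne_zero (hne _) (ih.2 x)

/-- Let `f` be a C¹ diffeomorphism of `[0,1]` fixing exactly `0` and `1`,
with `f x < x` on `(0,1)`, having the unbounded distortion property: for `x, y ∈ (0,1)`
not on the same `f`-orbit, `limsup |log (fⁿ)'(x) − log (fⁿ)'(y)| = ∞` (i.e. the
sequence is unbounded).  Then any C¹ diffeomorphism `g` of `[0,1]` commuting with `f`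
maps each `x ∈ (0,1)` to a point of the `f`-orbit of `x`. -/
theorem stmt_1 (f g : ℝ ≃ ℝ)
    (hf : ContDiff ℝ 1 ⇑f) (hf' : ContDiff ℝ 1 ⇑f.symm)
    (hg : ContDiff ℝ 1 ⇑g) (hg' : ContDiff ℝ 1 ⇑g.symm)
    (hfbij : BijOn f (Icc (0:ℝ) 1) (Icc (0:ℝ) 1))
    (hgbij : BijOn g (Icc (0:ℝ) 1) (Icc (0:ℝ) 1))
    (hf0 : f 0 = 0) (hf1 : f 1 = 1)
    (hfix : ∀ x ∈ Icc (0:ℝ) 1, f x = x → x = 0 ∨ x = 1)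
    (hdec : ∀ x ∈ Ioo (0:ℝ) 1, f x < x)
    (hUD : ∀ x ∈ Ioo (0:ℝ) 1, ∀ y ∈ Ioo (0:ℝ) 1,
      (¬ ∃ k : ℤ, (f ^ k) x = y) →
      ∀ N : ℝ, ∃ n : ℕ,
        N < |Real.log (deriv ⇑(f ^ n) x) - Real.log (deriv ⇑(f ^ n) y)|)
    (hcomm : ∀ x ∈ Icc (0:ℝ) 1, g (f x) = f (g x)) :
    ∀ x ∈ Ioo (0:ℝ) 1, ∃ k : ℤ, g x = (f ^ k) x := by
  intro x hx
  by_contra hcon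
  -- basic facts
  have hxI : x ∈ Icc (0:ℝ) 1 := ⟨hx.1.le, hx.2.le⟩
  have hgdiff : Differentiable ℝ (⇑g) := hg.differentiable one_ne_zero
  have hfdiff : Differentiable ℝ (⇑f) := hf.differentiable one_ne_zero
  have hgne : ∀ z, deriv (⇑g) z ≠ 0 := aux_deriv_ne_zero g hg hg'
  have hfne : ∀ z, deriv (⇑f) z ≠ 0 := aux_deriv_ne_zero f hf hf'
  -- g x ∈ Ioo 0 1
  have hgxI : g x ∈ Icc (0:ℝ) 1 := hgbij.mapsTo hxI
  have hfxx : f x ≠ x := by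
    intro h
    rcases hfix x hxI h with h0 | h1
    · exact absurd hx.1 (by rw [h0]; exact lt_irrefl 0)
    · exact absurd hx.2 (by rw [h1]; exact lt_irrefl 1)
  have hgx : g x ∈ Ioo (0:ℝ) 1 := by
    refine ⟨lt_of_le_of_ne hgxI.1 ?_, lt_of_le_of_ne hgxI.2 ?_⟩
    · intro h
      apply hfxx
      apply g.injective
      rw [hcomm x hxI, ← h, hf0]
    · intro h
      apply hfxx
      apply g.injective
      rw [hcomm x hxI, h, hf1]
  -- iterates stay in Icc
  have hmaps : ∀ n : ℕ, ∀ z ∈ Icc (0:ℝ) 1, (⇑f)^[n] z ∈ Icc (0:ℝ) 1 := by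
    intro n
    exact hfbij.mapsTo.iterate n
  -- commutation for iterates on Icc
  have hcommn : ∀ n : ℕ, ∀ z ∈ Icc (0:ℝ) 1, g ((⇑f)^[n] z) = (⇑f)^[n] (g z) := by
    intro n
    induction n with
    | zero => intro z _; simp
    | succ n ih =>
      intro z hz
      rw [Function.iterate_succ_apply', Function.iterate_succ_apply',
        hcomm _ (hmaps n z hz), ih z hz]
  -- bound for |log (deriv g)| on Icc
  have hlogcont : Continuous (fun z => Real.log (deriv (⇑g) z)) := by
    rw [continuous_iff_continuousAt]
    intro z
    exact (Real.continuousAt_log (hgne z)).comp (hg.continuous_deriv le_rfl).continuousAt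
  obtain ⟨M, hM⟩ := isCompact_Icc.exists_bound_of_continuousOn
    (hlogcont.continuousOn : ContinuousOn (fun z => Real.log (deriv (⇑g) z)) (Icc (0:ℝ) 1))
  -- apply unbounded distortion
  have hnot : ¬ ∃ k : ℤ, (f ^ k) x = g x := by
    intro ⟨k, hk⟩
    exact hcon ⟨k, hk.symm⟩
  obtain ⟨n, hn⟩ := hUD x hx (g x) hgx hnot (|Real.log (deriv (⇑g) x)| + M)
  -- the key identity
  obtain ⟨hFd, hFne⟩ := aux_iterate (⇑f) hfdiff hfne n
  have hpow : ⇑(f ^ n) = (⇑f)^[n] := rfl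
  rw [hpow] at hn
  -- chain rule on both sides
  have h1 : HasDerivAt (⇑g ∘ (⇑f)^[n])
      (deriv (⇑g) ((⇑f)^[n] x) * deriv ((⇑f)^[n]) x) x :=
    (hgdiff _).hasDerivAt.comp x (hFd x).hasDerivAt
  have h2 : HasDerivAt ((⇑f)^[n] ∘ ⇑g)
      (deriv ((⇑f)^[n]) (g x) * deriv (⇑g) x) x :=
    (hFd _).hasDerivAt.comp x (hgdiff x).hasDerivAt
  have hEq : (⇑g ∘ (⇑f)^[n]) =ᶠ[nhds x] ((⇑f)^[n] ∘ ⇑g) := by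
    filter_upwards [Ioo_mem_nhds hx.1 hx.2] with z hz
    exact hcommn n z ⟨hz.1.le, hz.2.le⟩
  have hder : deriv (⇑g) ((⇑f)^[n] x) * deriv ((⇑f)^[n]) x
      = deriv ((⇑f)^[n]) (g x) * deriv (⇑g) x := by
    have := hEq.deriv_eq
    rw [h1.deriv, h2.deriv] at this
    exact this
  -- take logs
  have hlog : Real.log (deriv (⇑g) ((⇑f)^[n] x)) + Real.log (deriv ((⇑f)^[n]) x)
      = Real.log (deriv ((⇑f)^[n]) (g x)) + Real.log (deriv (⇑g) x) := by
    rw [← Real.log_mul (hgne _) (hFne x), ← Real.log_mul (hFne _) (hgne x), hder]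
  have hkey : Real.log (deriv ((⇑f)^[n]) x) - Real.log (deriv ((⇑f)^[n]) (g x))
      = Real.log (deriv (⇑g) x) - Real.log (deriv (⇑g) ((⇑f)^[n] x)) := by
    linarith
  rw [hkey] at hn
  -- contradiction with the bound
  have hMb : |Real.log (deriv (⇑g) ((⇑f)^[n] x))| ≤ M := by
    have := hM ((⇑f)^[n] x) (hmaps n x hxI)
    simpa using this
  have : |Real.log (deriv (⇑g) x) - Real.log (deriv (⇑g) ((⇑f)^[n] x))|
      ≤ |Real.log (deriv (⇑g) x)| + M :=
    le_trans (abs_sub _ _) (by linarith)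
  linarith
end

section
/- Let f : ℝ → ℝ be a C¹ diffeomorphism of [0,1] fixing exactly 0 and 1 with f(x) < x on (0,1), satisfying the unbounded distortion property (for x,y ∈ (0,1) not on the same f-orbit, the sequence |log (fⁿ)'(x) − log (fⁿ)'(y)| is unbounded in n). Then any C¹ diffeomorphism g of [0,1] commuting with f equals fⁱ on (0,1) for some i ∈ ℤ. -/
open Set Filter

/-- Let `f` be a C¹ diffeomorphism of `[0,1]` fixing exactly `0` and `1`,
with `f x < x` on `(0,1)`, having the unbounded distortion property: for `x, y ∈ (0,1)`
not on the same `f`-orbit, `limsup |log (fⁿ)'(x) − log (fⁿ)'(y)| = ∞` (i.e. the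
sequence is unbounded).  Then any C¹ diffeomorphism `g` of `[0,1]` commuting with `f`
equals `fⁱ` on `(0,1)` for a single integer `i`. -/
theorem stmt_2 (f g : ℝ ≃ ℝ)
    (hf : ContDiff ℝ 1 ⇑f) (hf' : ContDiff ℝ 1 ⇑f.symm)
    (hg : ContDiff ℝ 1 ⇑g) (hg' : ContDiff ℝ 1 ⇑g.symm)
    (hfbij : BijOn f (Icc (0:ℝ) 1) (Icc (0:ℝ) 1))
    (hgbij : BijOn g (Icc (0:ℝ) 1) (Icc (0:ℝ) 1))
    (hf0 : f 0 = 0) (hf1 : f 1 = 1)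
    (hfix : ∀ x ∈ Icc (0:ℝ) 1, f x = x → x = 0 ∨ x = 1)
    (hdec : ∀ x ∈ Ioo (0:ℝ) 1, f x < x)
    (hUD : ∀ x ∈ Ioo (0:ℝ) 1, ∀ y ∈ Ioo (0:ℝ) 1,
      (¬ ∃ k : ℤ, (f ^ k) x = y) →
      ∀ N : ℝ, ∃ n : ℕ,
        N < |Real.log (deriv ⇑(f ^ n) x) - Real.log (deriv ⇑(f ^ n) y)|)
    (hcomm : ∀ x ∈ Icc (0:ℝ) 1, g (f x) = f (g x)) :
    ∃ i : ℤ, ∀ x ∈ Ioo (0:ℝ) 1, g x = (f ^ i) x := by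
  have hfc : Continuous ⇑f := hf.continuous
  have hgc : Continuous ⇑g := hg.continuous
  have hfd : ∀ x, HasDerivAt (⇑f) (deriv ⇑f x) x :=
    fun x => (hf.differentiable one_ne_zero x).hasDerivAt
  have hgd : ∀ x, HasDerivAt (⇑g) (deriv ⇑g x) x :=
    fun x => (hg.differentiable one_ne_zero x).hasDerivAt
  -- nonvanishing derivatives of a global diffeo
  have hne : ∀ (e : ℝ ≃ ℝ), ContDiff ℝ 1 ⇑e → ContDiff ℝ 1 ⇑e.symm →
      ∀ x, deriv ⇑e x ≠ 0 := by
    intro e he he' x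
    have h1 : HasDerivAt (⇑e.symm ∘ ⇑e) (deriv ⇑e.symm (e x) * deriv ⇑e x) x :=
      ((he'.differentiable one_ne_zero (e x)).hasDerivAt).comp x
        ((he.differentiable one_ne_zero x).hasDerivAt)
    have h2 : (⇑e.symm ∘ ⇑e) = id := by funext y; simp
    rw [h2] at h1
    have h3 : deriv ⇑e.symm (e x) * deriv ⇑e x = 1 := h1.unique (hasDerivAt_id x)
    intro h
    rw [h, mul_zero] at h3
    exact one_ne_zero h3.symm
  have hfne : ∀ x, deriv ⇑f x ≠ 0 := hne f hf hf'
  have hgne : ∀ x, deriv ⇑g x ≠ 0 := hne g hg hg'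
  -- f maps (0,1) into (0,1)
  have hfIoo : MapsTo ⇑f (Ioo (0:ℝ) 1) (Ioo (0:ℝ) 1) := by
    intro x hx
    have h1 : f x ∈ Icc (0:ℝ) 1 := hfbij.mapsTo (Ioo_subset_Icc_self hx)
    refine ⟨h1.1.lt_of_ne' ?_, h1.2.lt_of_ne ?_⟩
    · intro h
      have : x = 0 := f.injective (by rw [hf0, h])
      exact hx.1.ne' this
    · intro h
      have : x = 1 := f.injective (by rw [hf1, h])
      exact (ne_of_lt hx.2) this
  -- f.symm maps (0,1) into (0,1)
  have hfsIoo : MapsTo ⇑f.symm (Ioo (0:ℝ) 1) (Ioo (0:ℝ) 1) := by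
    intro y hy
    obtain ⟨a, ha, hfa⟩ := hfbij.surjOn (Ioo_subset_Icc_self hy)
    have hay : a = f.symm y := by rw [← hfa]; simp
    rw [← hay]
    refine ⟨ha.1.lt_of_ne' ?_, ha.2.lt_of_ne ?_⟩
    · intro h; rw [h, hf0] at hfa; exact hy.1.ne' hfa.symm
    · intro h; rw [h, hf1] at hfa; exact (ne_of_lt hy.2) hfa.symm
  -- integer iterates map (0,1) into (0,1)
  have hz : ∀ k : ℤ, MapsTo ⇑(f^k) (Ioo (0:ℝ) 1) (Ioo (0:ℝ) 1) := by
    intro k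
    induction k using Int.induction_on with
    | zero => intro x hx; simpa using hx
    | succ k ih =>
        intro x hx
        have : f ^ ((k:ℤ)+1) = f ^ (k:ℤ) * f := zpow_add_one f k
        rw [this, Equiv.Perm.mul_apply]
        exact ih (hfIoo hx)
    | pred k ih =>
        intro x hx
        have : f ^ (-(k:ℤ)-1) = f ^ (-(k:ℤ)) * f⁻¹ := zpow_sub_one f (-k)
        rw [this, Equiv.Perm.mul_apply]
        have hinv : (f⁻¹ : ℝ ≃ ℝ) x = f.symm x := rfl
        rw [hinv]
        exact ih (hfsIoo hx)
  have hzn : ∀ n : ℕ, MapsTo ⇑(f^n) (Ioo (0:ℝ) 1) (Ioo (0:ℝ) 1) := by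
    intro n
    have := hz (n : ℤ)
    rwa [zpow_natCast] at this
  -- integer iterates are continuous
  have hzc : ∀ k : ℤ, Continuous ⇑(f^k) := by
    intro k
    induction k using Int.induction_on with
    | zero => simpa using continuous_id
    | succ k ih =>
        have h : f ^ ((k:ℤ)+1) = f ^ (k:ℤ) * f := zpow_add_one f k
        have h2 : ⇑(f ^ ((k:ℤ)+1)) = ⇑(f ^ (k:ℤ)) ∘ ⇑f := by
          funext y; rw [h]; rfl
        rw [h2]; exact ih.comp hfc
    | pred k ih =>
        have h : f ^ (-(k:ℤ)-1) = f ^ (-(k:ℤ)) * f⁻¹ := zpow_sub_one f (-k)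
        have h2 : ⇑(f ^ (-(k:ℤ)-1)) = ⇑(f ^ (-(k:ℤ))) ∘ ⇑f.symm := by
          funext y; rw [h]; rfl
        rw [h2]; exact ih.comp hf'.continuous
  -- the orbit map is strictly antitone
  have hstrict : ∀ x ∈ Ioo (0:ℝ) 1, StrictAnti (fun k : ℤ => (f^k) x) := by
    intro x hx
    apply strictAnti_int_of_succ_lt
    intro k
    have h : f ^ (k+1) = f * f ^ k := by rw [add_comm, zpow_add, zpow_one]
    show (f ^ (k+1)) x < (f ^ k) x
    rw [h, Equiv.Perm.mul_apply]
    exact hdec _ (hz k hx)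
  -- g preserves the endpoint set
  have h0m : (0:ℝ) ∈ Icc (0:ℝ) 1 := ⟨le_refl 0, zero_le_one⟩
  have h1m : (1:ℝ) ∈ Icc (0:ℝ) 1 := ⟨zero_le_one, le_refl 1⟩
  have hg0 : g 0 = 0 ∨ g 0 = 1 := by
    have h2 := hcomm 0 h0m
    rw [hf0] at h2
    exact hfix _ (hgbij.mapsTo h0m) h2.symm
  have hg1 : g 1 = 0 ∨ g 1 = 1 := by
    have h2 := hcomm 1 h1m
    rw [hf1] at h2
    exact hfix _ (hgbij.mapsTo h1m) h2.symm
  have hgIoo : MapsTo ⇑g (Ioo (0:ℝ) 1) (Ioo (0:ℝ) 1) := by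
    intro x hx
    have h1 : g x ∈ Icc (0:ℝ) 1 := hgbij.mapsTo (Ioo_subset_Icc_self hx)
    have hx0 : x ≠ 0 := ne_of_gt hx.1
    have hx1 : x ≠ 1 := ne_of_lt hx.2
    refine ⟨h1.1.lt_of_ne' ?_, h1.2.lt_of_ne ?_⟩
    · intro h
      rcases hg0 with h0 | h0
      · exact hx0 (g.injective (by rw [h, h0]))
      · rcases hg1 with h1' | h1'
        · exact hx1 (g.injective (by rw [h, h1']))
        · have : (0:ℝ) = 1 := g.injective (by rw [h0, h1'])
          norm_num at this
    · intro h
      rcases hg1 with h1' | h1'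
      · rcases hg0 with h0 | h0
        · have : g 0 = g 1 := by rw [h0, h1']
          have := g.injective this
          norm_num at this
        · exact hx0 (g.injective (by rw [h, h0]))
      · exact hx1 (g.injective (by rw [h, h1']))
  -- commutation for natural iterates
  have hcommn : ∀ n : ℕ, ∀ x ∈ Icc (0:ℝ) 1, g ((f^n) x) = (f^n) (g x) := by
    intro n
    induction n with
    | zero => intro x _; simp
    | succ n ih =>
        intro x hx
        have hps : f ^ (n+1) = f ^ n * f := pow_succ f n
        rw [hps, Equiv.Perm.mul_apply, Equiv.Perm.mul_apply]
        rw [ih (f x) (hfbij.mapsTo hx), hcomm x hx]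
  -- derivative of natural iterates exists and is nonzero
  have hDn : ∀ n : ℕ, ∀ x : ℝ, ∃ d : ℝ, d ≠ 0 ∧ HasDerivAt (⇑(f^n)) d x := by
    intro n
    induction n with
    | zero =>
        intro x
        refine ⟨1, one_ne_zero, ?_⟩
        have h : ⇑(f^0 : ℝ ≃ ℝ) = id := by funext y; simp
        rw [h]; exact hasDerivAt_id x
    | succ n ih =>
        intro x
        obtain ⟨d, hd0, hd⟩ := ih x
        refine ⟨deriv ⇑f ((f^n) x) * d, mul_ne_zero (hfne _) hd0, ?_⟩
        have h2 : ⇑(f ^ (n+1)) = ⇑f ∘ ⇑(f ^ n) := by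
          funext y
          rw [pow_succ' f n]; rfl
        rw [h2]
        exact (hfd _).comp x hd
  -- key identity: distortion along the orbit equals distortion of g
  have key : ∀ x ∈ Ioo (0:ℝ) 1, ∀ n : ℕ,
      Real.log (deriv ⇑(f^n) x) - Real.log (deriv ⇑(f^n) (g x)) =
      Real.log (deriv ⇑g x) - Real.log (deriv ⇑g ((f^n) x)) := by
    intro x hx n
    obtain ⟨d1, hd1ne, hd1⟩ := hDn n x
    obtain ⟨d2, hd2ne, hd2⟩ := hDn n (g x)
    have hL : HasDerivAt (fun y => g ((f^n) y)) (deriv ⇑g ((f^n) x) * d1) x :=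
      (hgd _).comp x hd1
    have hR : HasDerivAt (fun y => (f^n) (g y)) (d2 * deriv ⇑g x) x :=
      hd2.comp x (hgd x)
    have heq : (fun y => g ((f^n) y)) =ᶠ[nhds x] (fun y => (f^n) (g y)) := by
      filter_upwards [isOpen_Ioo.mem_nhds hx] with y hy
      exact hcommn n y (Ioo_subset_Icc_self hy)
    have hderiv_eq : deriv ⇑g ((f^n) x) * d1 = d2 * deriv ⇑g x := by
      rw [← hL.deriv, ← hR.deriv]
      exact heq.deriv_eq
    have l1 : Real.log (deriv ⇑g ((f^n) x)) + Real.log d1 =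
        Real.log d2 + Real.log (deriv ⇑g x) := by
      rw [← Real.log_mul (hgne _) hd1ne, ← Real.log_mul hd2ne (hgne _), hderiv_eq]
    rw [hd1.deriv, hd2.deriv]
    linarith
  -- bound on log of deriv g over [0,1]
  have hlogcont : Continuous (fun y => Real.log (deriv ⇑g y)) := by
    rw [continuous_iff_continuousAt]
    intro y
    exact (Real.continuousAt_log (hgne y)).comp ((hg.continuous_deriv le_rfl).continuousAt)
  obtain ⟨C, hC⟩ := isCompact_Icc.exists_bound_of_continuousOn
    (hlogcont.continuousOn : ContinuousOn (fun y => Real.log (deriv ⇑g y)) (Icc (0:ℝ) 1))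
  -- every point of (0,1) is sent by g to a point on its orbit
  have hk : ∀ x ∈ Ioo (0:ℝ) 1, ∃ k : ℤ, (f^k) x = g x := by
    intro x hx
    by_contra hcon
    obtain ⟨n, hn⟩ := hUD x hx (g x) (hgIoo hx) hcon (C + C)
    have b1 : ‖Real.log (deriv ⇑g x)‖ ≤ C := hC x (Ioo_subset_Icc_self hx)
    have b2 : ‖Real.log (deriv ⇑g ((f^n) x))‖ ≤ C :=
      hC _ (Ioo_subset_Icc_self (hzn n hx))
    rw [key x hx n] at hn
    rw [Real.norm_eq_abs] at b1 b2
    have habs : |Real.log (deriv ⇑g x) - Real.log (deriv ⇑g ((f^n) x))| ≤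
        |Real.log (deriv ⇑g x)| + |Real.log (deriv ⇑g ((f^n) x))| := abs_sub _ _
    linarith
  -- the integer is locally determined
  have hhalf : (1/2 : ℝ) ∈ Ioo (0:ℝ) 1 := by norm_num
  obtain ⟨i₀, hi₀⟩ := hk _ hhalf
  set V : Set ℝ := {y | (f^(i₀+1)) y < g y ∧ g y < (f^(i₀-1)) y} with hV
  have hVopen : IsOpen V := by
    have h1 : IsOpen {y : ℝ | (f^(i₀+1)) y < g y} := isOpen_lt (hzc _) hgc
    have h2 : IsOpen {y : ℝ | g y < (f^(i₀-1)) y} := isOpen_lt hgc (hzc _)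
    exact h1.inter h2
  have hSV : ∀ x ∈ Ioo (0:ℝ) 1, (g x = (f^i₀) x ↔ x ∈ V) := by
    intro x hx
    constructor
    · intro h
      refine ⟨?_, ?_⟩
      · rw [h]; exact (hstrict x hx) (lt_add_one i₀)
      · rw [h]; exact (hstrict x hx) (sub_one_lt i₀)
    · intro hxV
      obtain ⟨hxl, hxr⟩ : (f^(i₀+1)) x < g x ∧ g x < (f^(i₀-1)) x := hxV
      obtain ⟨k, hkx⟩ := hk x hx
      rw [← hkx] at hxl hxr
      have h1 : k < i₀ + 1 := ((hstrict x hx).lt_iff_gt).mp hxl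
      have h2 : i₀ - 1 < k := ((hstrict x hx).lt_iff_gt).mp hxr
      have hki : k = i₀ := by omega
      rw [← hkx, hki]
  refine ⟨i₀, fun x hx => ?_⟩
  by_contra hne'
  have hCopen : IsOpen {y : ℝ | g y ≠ (f^i₀) y} :=
    (isClosed_eq hgc (hzc i₀)).isOpen_compl
  have hsub : Ioo (0:ℝ) 1 ⊆ V ∪ {y : ℝ | g y ≠ (f^i₀) y} := by
    intro y hy
    by_cases h : g y = (f^i₀) y
    · exact Or.inl ((hSV y hy).mp h)
    · exact Or.inr h
  have hne1 : (Ioo (0:ℝ) 1 ∩ V).Nonempty :=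
    ⟨1/2, hhalf, (hSV _ hhalf).mp hi₀.symm⟩
  have hne2 : (Ioo (0:ℝ) 1 ∩ {y : ℝ | g y ≠ (f^i₀) y}).Nonempty := ⟨x, hx, hne'⟩
  obtain ⟨z, hz1, hz2, hz3⟩ := isPreconnected_Ioo (a := (0:ℝ)) (b := 1)
    V {y : ℝ | g y ≠ (f^i₀) y} hVopen hCopen hsub hne1 hne2
  exact hz3 ((hSV z hz1).mpr hz2)
end

section
/- Let Φ : ℝ → ℝ be a C^∞ function with Φ(0)=1, Φ supported in (−1,1), all derivatives of Φ vanishing at 0, and ∫Φ = 1. Let a : ℝ → ℝ be continuous, compactly supported in an interval D, with ∫_{u*}^{u} a(x)dx = ψ(u) − u for a fixed u* ∈ ∂D. Define Q(u,η) = η ∫_{u*}^{u} ∫_ℝ Φ(w) a(x − wη) dw dx. Then Q is C¹ on ℝ², ∂Q/∂u(u,0) = 0 for all u, and ∂Q/∂η(u,0) = ∫_{u*}^{u} a(x) dx for all u. -/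
open Set MeasureTheory intervalIntegral

/-- Let `Φ` be a smooth bell function (`Φ(0) = 1`, support in
`(−1,1)`, all derivatives vanishing at `0`, `∫Φ = 1`) and let
`a = ψ' − 1` be continuous, supported in the interior of `D = [d₁,d₂]`, with
`∫_{u*}^{u} a = ψ(u) − u` for `u* = d₁`.  Then
`Q(u,η) = η ∫_{u*}^{u} ∫ Φ(w) a(x − wη) dw dx` is C¹ on `ℝ²`, with
`∂Q/∂u(u,0) = 0` and `∂Q/∂η(u,0) = ∫_{u*}^{u} a = ψ(u) − u` for all `u`. -/
theorem stmt_13 (Φ a ψ : ℝ → ℝ) (d₁ d₂ : ℝ) (hd : d₁ < d₂)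
    (hΦ : ContDiff ℝ (⊤ : ℕ∞) Φ) (hΦ0 : Φ 0 = 1)
    (hΦsupp : Function.support Φ ⊆ Ioo (-1 : ℝ) 1)
    (hΦder : ∀ k : ℕ, 1 ≤ k → iteratedDeriv k Φ 0 = 0)
    (hΦint : ∫ w : ℝ, Φ w = 1)
    (ha : Continuous a)
    (hasupp : Function.support a ⊆ Ioo d₁ d₂)
    (haψ : ∀ u : ℝ, ∫ x in d₁..u, a x = ψ u - u)
    (Q : ℝ × ℝ → ℝ)
    (hQ : ∀ p : ℝ × ℝ, Q p = p.2 * ∫ x in d₁..p.1, ∫ w : ℝ, Φ w * a (x - w * p.2)) :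
    ContDiff ℝ 1 Q ∧
    (∀ u : ℝ, fderiv ℝ Q (u, 0) (1, 0) = 0) ∧
    (∀ u : ℝ, fderiv ℝ Q (u, 0) (0, 1) = ψ u - u) := by
  have hΦcont : Continuous Φ := hΦ.continuous
  have hΦc : HasCompactSupport Φ := HasCompactSupport.intro isCompact_Icc
    (fun x hx => by
      by_contra h
      exact hx (Ioo_subset_Icc_self (hΦsupp h)))
  have hac : HasCompactSupport a := HasCompactSupport.intro isCompact_Icc
    (fun x hx => by
      by_contra h
      exact hx (Ioo_subset_Icc_self (hasupp h)))
  obtain ⟨Ma, hMa⟩ := hac.exists_bound_of_continuous ha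
  have hMa0 : 0 ≤ Ma := le_trans (norm_nonneg _) (hMa 0)
  -- the antiderivative of `a`
  set A : ℝ → ℝ := fun t => ∫ x in d₁..t, a x with hAdef
  have hA : ∀ t, HasDerivAt A (a t) t := fun t =>
    intervalIntegral.integral_hasDerivAt_right (ha.intervalIntegrable _ _)
      (ha.stronglyMeasurableAtFilter _ _) ha.continuousAt
  have hAc : Continuous A := continuous_iff_continuousAt.mpr fun t => (hA t).continuousAt
  have hA0 : A d₁ = 0 := intervalIntegral.integral_same
  have hAψ : ∀ u : ℝ, A u = ψ u - u := haψ
  -- the linear form `ℓ w (v₁, v₂) = v₁ - w v₂`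
  set ℓ : ℝ → (ℝ × ℝ →L[ℝ] ℝ) := fun w =>
    ContinuousLinearMap.fst ℝ ℝ ℝ - w • ContinuousLinearMap.snd ℝ ℝ ℝ with hℓdef
  have hℓapp : ∀ w (v : ℝ × ℝ), ℓ w v = v.1 - w * v.2 := fun w v => rfl
  have hℓnorm : ∀ w, ‖ℓ w‖ ≤ 1 + |w| := by
    intro w
    refine ContinuousLinearMap.opNorm_le_bound _ (by positivity) (fun v => ?_)
    rw [hℓapp]
    have h1 : |v.1| ≤ ‖v‖ := norm_fst_le v
    have h2 : |v.2| ≤ ‖v‖ := norm_snd_le v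
    calc ‖v.1 - w * v.2‖ ≤ |v.1| + |w * v.2| := abs_sub _ _
      _ = |v.1| + |w| * |v.2| := by rw [abs_mul]
      _ ≤ ‖v‖ + |w| * ‖v‖ := by
          have := mul_le_mul_of_nonneg_left h2 (abs_nonneg w)
          linarith
      _ = (1 + |w|) * ‖v‖ := by ring
  have hℓcont : Continuous ℓ := by
    apply continuous_const.sub
    exact continuous_id.smul continuous_const
  -- the pointwise derivative of the integrand
  set L : ℝ → ℝ × ℝ → (ℝ × ℝ →L[ℝ] ℝ) := fun w p =>
    (Φ w * a (p.1 - w * p.2)) • ℓ w with hLdef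
  have hLd : ∀ w (p : ℝ × ℝ),
      HasFDerivAt (fun q : ℝ × ℝ => Φ w * A (q.1 - w * q.2)) (L w p) p := by
    intro w p
    have hm : HasFDerivAt (fun q : ℝ × ℝ => q.1 - w * q.2) (ℓ w) p :=
      hasFDerivAt_fst.sub (hasFDerivAt_snd.const_mul w)
    have h1 := ((hA (p.1 - w * p.2)).comp_hasFDerivAt p hm).const_mul (Φ w)
    simpa [hLdef, smul_smul] using h1
  have hLnorm : ∀ w (p : ℝ × ℝ), ‖L w p‖ ≤ |Φ w| * (Ma * (1 + |w|)) := by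
    intro w p
    have hc : ‖Φ w * a (p.1 - w * p.2)‖ ≤ |Φ w| * Ma := by
      have hma : |a (p.1 - w * p.2)| ≤ Ma := by
        simpa using hMa (p.1 - w * p.2)
      rw [Real.norm_eq_abs, abs_mul]
      gcongr
    have he : ‖L w p‖ = ‖Φ w * a (p.1 - w * p.2)‖ * ‖ℓ w‖ :=
      norm_smul (Φ w * a (p.1 - w * p.2)) (ℓ w)
    rw [he]
    calc ‖Φ w * a (p.1 - w * p.2)‖ * ‖ℓ w‖ ≤ (|Φ w| * Ma) * (1 + |w|) :=
          mul_le_mul hc (hℓnorm w) (norm_nonneg _) (by positivity)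
      _ = |Φ w| * (Ma * (1 + |w|)) := by ring
  have hLcont : ∀ p : ℝ × ℝ, Continuous (fun w => L w p) := by
    intro p
    exact ((hΦcont.mul (ha.comp (continuous_const.sub
      (continuous_id.mul continuous_const)))).smul hℓcont)
  have hLcont' : ∀ w : ℝ, Continuous (fun p : ℝ × ℝ => L w p) := by
    intro w
    exact ((continuous_const.mul (ha.comp (continuous_fst.sub
      (continuous_const.mul continuous_snd)))).smul continuous_const)
  -- integrability facts
  set bound : ℝ → ℝ := fun w => |Φ w| * (Ma * (1 + |w|)) with hbdef
  have hbound_int : Integrable bound := by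
    apply Continuous.integrable_of_hasCompactSupport
    · exact (hΦcont.abs.mul (continuous_const.mul (continuous_const.add continuous_abs)))
    · exact (hΦc.abs).mul_right
  have hFint : ∀ p : ℝ × ℝ, Integrable (fun w => Φ w * A (p.1 - w * p.2)) := by
    intro p
    apply Continuous.integrable_of_hasCompactSupport
    · exact hΦcont.mul (hAc.comp (continuous_const.sub (continuous_id.mul continuous_const)))
    · exact hΦc.mul_right
  have hLint : ∀ p : ℝ × ℝ, Integrable (fun w => L w p) := fun p =>
    hbound_int.mono' ((hLcont p).aestronglyMeasurable)
      (Filter.Eventually.of_forall (fun w => hLnorm w p))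
  -- the smoothed function `B` and its derivative `D`
  set B : ℝ × ℝ → ℝ := fun p => ∫ w, Φ w * A (p.1 - w * p.2) with hBdef
  set D : ℝ × ℝ → (ℝ × ℝ →L[ℝ] ℝ) := fun p => ∫ w, L w p with hDdef
  have hBder : ∀ p : ℝ × ℝ, HasFDerivAt B (D p) p := by
    intro p
    apply _root_.hasFDerivAt_integral_of_dominated_of_fderiv_le
      (F' := fun (q : ℝ × ℝ) (w : ℝ) => L w q) (bound := bound) Filter.univ_mem
    · exact Filter.Eventually.of_forall (fun q =>
        ((hΦcont.mul (hAc.comp (continuous_const.sub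
          (continuous_id.mul continuous_const)))).aestronglyMeasurable))
    · exact hFint p
    · exact (hLcont p).aestronglyMeasurable
    · exact Filter.Eventually.of_forall (fun w q _ => hLnorm w q)
    · exact hbound_int
    · exact Filter.Eventually.of_forall (fun w q _ => hLd w q)
  have hDcont : Continuous D := by
    apply continuous_of_dominated (bound := bound)
    · exact fun p => (hLcont p).aestronglyMeasurable
    · exact fun p => Filter.Eventually.of_forall (fun w => hLnorm w p)
    · exact hbound_int
    · exact Filter.Eventually.of_forall (fun w => hLcont' w)
  have hB1 : ContDiff ℝ 1 B := by
    rw [contDiff_one_iff_fderiv]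
    refine ⟨fun p => (hBder p).differentiableAt, ?_⟩
    have : fderiv ℝ B = D := funext (fun p => (hBder p).fderiv)
    rw [this]
    exact hDcont
  -- applied form of `D`
  have hDapp : ∀ (p : ℝ × ℝ) (v : ℝ × ℝ),
      D p v = ∫ w, (Φ w * a (p.1 - w * p.2)) * (v.1 - w * v.2) := by
    intro p v
    rw [hDdef]
    rw [ContinuousLinearMap.integral_apply (hLint p) v]
    refine integral_congr_ae (Filter.Eventually.of_forall fun w => ?_)
    rw [hLdef]
    simp [hℓapp]
  set S : ℝ × ℝ → ℝ := fun p => ∫ w, Φ w * a (p.1 - w * p.2) with hSdef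
  have hDS : ∀ p : ℝ × ℝ, D p (1, 0) = S p := by
    intro p
    rw [hDapp]
    simp [hSdef]
  have hScont : Continuous S := by
    have : S = (fun T : ℝ × ℝ →L[ℝ] ℝ => T (1, 0)) ∘ D := by
      funext p; simp [Function.comp, hDS p]
    rw [this]
    exact (ContinuousLinearMap.apply ℝ ℝ ((1 : ℝ), (0 : ℝ))).continuous.comp hDcont
  -- the key identity: the iterated integral equals `B (u, η) - B (d₁, η)`
  have hkey : ∀ u η : ℝ,
      (∫ x in d₁..u, ∫ w, Φ w * a (x - w * η)) = B (u, η) - B (d₁, η) := by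
    intro u η
    set f : ℝ → ℝ := fun u => (∫ x in d₁..u, S (x, η)) - (B (u, η) - B (d₁, η)) with hfdef
    have hf' : ∀ t, HasDerivAt f 0 t := by
      intro t
      have h1 : HasDerivAt (fun u => ∫ x in d₁..u, S (x, η)) (S (t, η)) t := by
        apply intervalIntegral.integral_hasDerivAt_right
        · exact (hScont.comp (continuous_id.prodMk continuous_const)).intervalIntegrable _ _
        · exact (hScont.comp (continuous_id.prodMk continuous_const)).stronglyMeasurableAtFilter _ _
        · exact (hScont.comp (continuous_id.prodMk continuous_const)).continuousAt
      have h2 : HasDerivAt (fun u => B (u, η)) (S (t, η)) t := by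
        have hin : HasDerivAt (fun u : ℝ => ((u, η) : ℝ × ℝ)) ((1 : ℝ), (0 : ℝ)) t :=
          (hasDerivAt_id t).prodMk (hasDerivAt_const t η)
        have := (hBder (t, η)).comp_hasDerivAt t hin
        rwa [hDS (t, η)] at this
      have h3 : HasDerivAt (fun u : ℝ => B (u, η) - B (d₁, η)) (S (t, η)) t :=
        h2.sub_const _
      have h4 := h1.sub h3
      rw [sub_self] at h4
      exact h4
    have hconst : f u = f d₁ := by
      apply is_const_of_deriv_eq_zero
      · exact fun t => (hf' t).differentiableAt
      · exact fun t => (hf' t).deriv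
    have hfd : f d₁ = 0 := by simp [hfdef]
    have hfu : f u = 0 := hconst.trans hfd
    exact sub_eq_zero.mp hfu
  -- value of `B` on the axis `η = 0`
  have hB0 : ∀ t : ℝ, B (t, 0) = A t := by
    intro t
    rw [hBdef]
    simp only [mul_zero, sub_zero]
    rw [MeasureTheory.integral_mul_const, hΦint, one_mul]
  -- `Q` in terms of `B`
  have hQB : ∀ p : ℝ × ℝ, Q p = p.2 * (B p - B (d₁, p.2)) := by
    intro p
    rw [hQ p, hkey p.1 p.2]
  have hQeq : Q = fun p : ℝ × ℝ => p.2 * (B p - B (d₁, p.2)) := funext hQB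
  have hQd : ∀ u : ℝ, HasFDerivAt Q
      ((0 : ℝ) • (D (u, 0) - (D (d₁, 0)).comp
          ((0 : ℝ × ℝ →L[ℝ] ℝ).prod (ContinuousLinearMap.snd ℝ ℝ ℝ)))
        + (B (u, 0) - B (d₁, 0)) • ContinuousLinearMap.snd ℝ ℝ ℝ) (u, 0) := by
    intro u
    rw [hQeq]
    have hinner : HasFDerivAt (fun p : ℝ × ℝ => ((d₁, p.2) : ℝ × ℝ))
        ((0 : ℝ × ℝ →L[ℝ] ℝ).prod (ContinuousLinearMap.snd ℝ ℝ ℝ)) (u, 0) :=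
      (hasFDerivAt_const d₁ _).prodMk hasFDerivAt_snd
    have hRd : HasFDerivAt (fun p : ℝ × ℝ => B p - B (d₁, p.2))
        (D (u, 0) - (D (d₁, 0)).comp
          ((0 : ℝ × ℝ →L[ℝ] ℝ).prod (ContinuousLinearMap.snd ℝ ℝ ℝ))) (u, 0) :=
      (hBder (u, 0)).sub (by have := (hBder (d₁, 0)).comp (u, 0) hinner; exact this)
    exact hasFDerivAt_snd.mul hRd
  refine ⟨?_, ?_, ?_⟩
  · rw [hQeq]
    exact contDiff_snd.mul (hB1.sub (hB1.comp (contDiff_const.prodMk contDiff_snd)))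
  · intro u
    rw [(hQd u).fderiv]
    simp
  · intro u
    rw [(hQd u).fderiv]
    simp [hB0, hA0, hAψ]
end

section
/- With Φ and a as above (Φ a smooth bell function with ∫Φ=1 and ∫Φ'(w)w dw = −1; a continuous, compactly supported, ‖a‖_∞ ≤ A), the function Q(u,η) = η ∫_{u*}^{u} ∫_ℝ Φ(w) a(x−wη) dw dx is C² on ℝ² and there is a constant C depending only on Φ and the diameter of the domain such that ‖Q‖_{C²} ≤ C‖a‖_∞ on any fixed compact neighborhood of D × {0}. -/
open Set MeasureTheory intervalIntegral

set_option maxHeartbeats 1600000 in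
set_option synthInstance.maxHeartbeats 400000 in
/-- With `Φ` a smooth bell function (`∫Φ = 1`, support in `(−1,1)`,
hence `∫Φ'(w)w dw = −1`) and a fixed compact neighborhood `V` of `D × {0}`
(`D = [d₁,d₂]`), there is a constant `C > 0` depending only on `Φ` and the domain
such that for every continuous `a` supported in the interior of `D` with
`‖a‖_∞ ≤ A`, the function `Q(u,η) = η ∫_{u*}^{u} ∫ Φ(w) a(x−wη) dw dx` is C² on
`ℝ²` and all its derivatives of order `≤ 2` are bounded by `C·A` on `V`. -/
theorem stmt_14 (Φ : ℝ → ℝ) (d₁ d₂ : ℝ) (hd : d₁ < d₂)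
    (hΦ : ContDiff ℝ (⊤ : ℕ∞) Φ) (hΦ0 : Φ 0 = 1)
    (hΦsupp : Function.support Φ ⊆ Ioo (-1 : ℝ) 1)
    (hΦint : ∫ w : ℝ, Φ w = 1)
    (V : Set (ℝ × ℝ)) (hV : IsCompact V)
    (hVnbhd : Icc d₁ d₂ ×ˢ ({0} : Set ℝ) ⊆ interior V) :
    ∃ C : ℝ, 0 < C ∧
      ∀ (a : ℝ → ℝ) (A : ℝ), Continuous a → Function.support a ⊆ Ioo d₁ d₂ →
      (∀ u : ℝ, |a u| ≤ A) →
      ∀ Q : ℝ × ℝ → ℝ,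
      (∀ p : ℝ × ℝ, Q p = p.2 * ∫ x in d₁..p.1, ∫ w : ℝ, Φ w * a (x - w * p.2)) →
      ContDiff ℝ 2 Q ∧
      ∀ p ∈ V, ∀ k : ℕ, k ≤ 2 → ‖iteratedFDeriv ℝ k Q p‖ ≤ C * A := by
  classical
  -- Basic facts about Φ
  have hΦc : Continuous Φ := hΦ.continuous
  have hΦdiff : Differentiable ℝ Φ := hΦ.differentiable (by simp)
  set Φ' : ℝ → ℝ := deriv Φ with hΦ'def
  have hΦd : ∀ w, HasDerivAt Φ (Φ' w) w := fun w => (hΦdiff w).hasDerivAt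
  have hΦ'c : Continuous Φ' := hΦ.continuous_deriv (by simp)
  have hΦzero : ∀ w : ℝ, w ∉ Ioo (-1:ℝ) 1 → Φ w = 0 := by
    intro w hw
    by_contra h
    exact hw (hΦsupp h)
  have hΦ'zero : ∀ w : ℝ, w ∉ Icc (-1:ℝ) 1 → Φ' w = 0 := by
    intro w hw
    have hopen : IsOpen (Icc (-1:ℝ) 1)ᶜ := isClosed_Icc.isOpen_compl
    have hev : Φ =ᶠ[nhds w] (fun _ => (0:ℝ)) := by
      filter_upwards [hopen.mem_nhds hw] with x hx
      exact hΦzero x (fun h => hx (Ioo_subset_Icc_self h))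
    rw [hΦ'def, hev.deriv_eq]
    simp
  have hΦCS : HasCompactSupport Φ :=
    HasCompactSupport.intro isCompact_Icc
      (fun x hx => hΦzero x fun h => hx (Ioo_subset_Icc_self h))
  have hΦ'CS : HasCompactSupport Φ' := HasCompactSupport.intro isCompact_Icc hΦ'zero
  have hΦInt : Integrable Φ := hΦc.integrable_of_hasCompactSupport hΦCS
  have hΦ'Int : Integrable Φ' := hΦ'c.integrable_of_hasCompactSupport hΦ'CS
  -- the master bound function
  set b : ℝ → ℝ := fun w => |Φ' w| * (2*(1+|w|)^2) with hbdef
  have hbnonneg : ∀ w, 0 ≤ b w := fun w => mul_nonneg (abs_nonneg _) (by positivity)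
  have hbInt : Integrable b := by
    have h1 : Continuous (fun w => Φ' w * (2*(1+|w|)^2)) := by fun_prop
    have h2 : HasCompactSupport (fun w => Φ' w * (2*(1+|w|)^2)) := hΦ'CS.mul_right
    have heq : b = fun w => |Φ' w * (2*(1+|w|)^2)| := by
      funext w
      rw [abs_mul, abs_of_pos (by positivity : (0:ℝ) < 2*(1+|w|)^2)]
    rw [heq]
    exact (h1.integrable_of_hasCompactSupport h2).abs
  set Ib : ℝ := ∫ w, b w with hIbdef
  have hIb0 : 0 ≤ Ib := integral_nonneg hbnonneg
  have hΦ'le_b : ∀ w, |Φ' w| ≤ b w := by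
    intro w
    have h1 : (1:ℝ) ≤ 2*(1+|w|)^2 := by nlinarith [abs_nonneg w]
    calc |Φ' w| = |Φ' w| * 1 := by ring
    _ ≤ b w := by
        rw [hbdef]
        exact mul_le_mul_of_nonneg_left h1 (abs_nonneg _)
  -- bound on V
  obtain ⟨R₀, hR₀⟩ := hV.isBounded.subset_closedBall 0
  set R : ℝ := max R₀ 0 with hRdef
  have hR0 : 0 ≤ R := le_max_right _ _
  have hRV : ∀ p ∈ V, ‖p‖ ≤ R := by
    intro p hp
    have := hR₀ hp
    rw [Metric.mem_closedBall, dist_zero_right] at this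
    exact this.trans (le_max_left _ _)
  -- the constant
  refine ⟨Ib * (d₂ - d₁) * (R + |d₁| + 1) + Ib + 1, ?_, ?_⟩
  · have h1 : 0 ≤ Ib * (d₂ - d₁) * (R + |d₁| + 1) :=
      mul_nonneg (mul_nonneg hIb0 (by linarith)) (by positivity)
    linarith
  intro a A ha hasupp hA Q hQdef
  have hA0 : 0 ≤ A := (abs_nonneg _).trans (hA 0)
  have hQ : Q = fun p : ℝ × ℝ => p.2 * ∫ x in d₁..p.1, ∫ w : ℝ, Φ w * a (x - w * p.2) :=
    funext hQdef
  subst hQ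
  have hazero : ∀ t : ℝ, t ∉ Ioo d₁ d₂ → a t = 0 := by
    intro t ht
    by_contra h
    exact ht (hasupp h)
  -- first antiderivative
  set Ap : ℝ → ℝ := fun t => ∫ s in d₁..t, a s with hApdef
  have hApd : ∀ t, HasDerivAt Ap (a t) t := fun t =>
    intervalIntegral.integral_hasDerivAt_right (ha.intervalIntegrable _ _)
      ha.stronglyMeasurable.stronglyMeasurableAtFilter ha.continuousAt
  have hApc : Continuous Ap := continuous_iff_continuousAt.2 fun t => (hApd t).continuousAt
  set M : ℝ := (d₂ - d₁) * A with hMdef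
  have hM0 : 0 ≤ M := mul_nonneg (by linarith) hA0
  have hApb : ∀ t, |Ap t| ≤ M := by
    have key : ∀ t, d₁ ≤ t → t ≤ d₂ → |Ap t| ≤ M := by
      intro t h1 h2
      have := intervalIntegral.norm_integral_le_of_norm_le_const
        (C := A) (f := a) (a := d₁) (b := t) (fun x _ => by simpa using hA x)
      rw [hApdef]
      simp only [Real.norm_eq_abs] at this
      calc |(∫ s in d₁..t, a s)| ≤ A * |t - d₁| := this
      _ ≤ A * (d₂ - d₁) := by
          apply mul_le_mul_of_nonneg_left _ hA0
          rw [abs_of_nonneg (by linarith)]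
          linarith
      _ = M := by rw [hMdef]; ring
    intro t
    rcases le_total t d₁ with ht | ht
    · have h0 : Ap t = 0 := by
        rw [hApdef]
        have : EqOn a 0 (uIcc d₁ t) := by
          intro s hs
          have hs2 : s ≤ d₁ := le_trans hs.2 (max_le le_rfl ht)
          exact hazero s (fun hmem => absurd hmem.1 (not_lt.2 hs2))
        exact (intervalIntegral.integral_congr this).trans (by simp)
      rw [h0]
      simpa using hM0
    rcases le_total t d₂ with ht2 | ht2
    · exact key t ht ht2
    · have hsplit : Ap t = Ap d₂ := by
        have h2 : (∫ s in d₂..t, a s) = 0 := by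
          have : EqOn a 0 (uIcc d₂ t) := by
            intro s hs
            have hs1 : d₂ ≤ s := le_trans (le_min le_rfl ht2) hs.1
            exact hazero s (fun hmem => absurd hmem.2 (not_lt.2 hs1))
          exact (intervalIntegral.integral_congr this).trans (by simp)
        have h3 : (∫ s in d₁..d₂, a s) + (∫ s in d₂..t, a s) = ∫ s in d₁..t, a s :=
          intervalIntegral.integral_add_adjacent_intervals
            (ha.intervalIntegrable d₁ d₂) (ha.intervalIntegrable d₂ t)
        show (∫ s in d₁..t, a s) = ∫ s in d₁..d₂, a s
        rw [← h3, h2, add_zero]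
      rw [hsplit]
      exact key d₂ (le_of_lt hd) le_rfl
  -- second antiderivative
  set A2 : ℝ → ℝ := fun t => ∫ s in d₁..t, Ap s with hA2def
  have hA2d : ∀ t, HasDerivAt A2 (Ap t) t := fun t =>
    intervalIntegral.integral_hasDerivAt_right (hApc.intervalIntegrable _ _)
      hApc.stronglyMeasurable.stronglyMeasurableAtFilter hApc.continuousAt
  have hA2c : Continuous A2 := continuous_iff_continuousAt.2 fun t => (hA2d t).continuousAt
  have hA2diff : ∀ x y : ℝ, |A2 x - A2 y| ≤ |x - y| * M := by
    intro x y
    have hxy : A2 x - A2 y = ∫ s in y..x, Ap s := by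
      rw [hA2def]
      exact intervalIntegral.integral_interval_sub_left
        (hApc.intervalIntegrable _ _) (hApc.intervalIntegrable _ _)
    rw [hxy]
    have := intervalIntegral.norm_integral_le_of_norm_le_const
      (C := M) (f := Ap) (a := y) (b := x) (fun s _ => by simpa using hApb s)
    simp only [Real.norm_eq_abs] at this
    calc |(∫ s in y..x, Ap s)| ≤ M * |x - y| := this
    _ = |x - y| * M := by ring
  -- linear maps
  set π₁ : ℝ × ℝ →L[ℝ] ℝ := ContinuousLinearMap.fst ℝ ℝ ℝ with hπ₁def
  set π₂ : ℝ × ℝ →L[ℝ] ℝ := ContinuousLinearMap.snd ℝ ℝ ℝ with hπ₂def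
  set e : ℝ → (ℝ × ℝ →L[ℝ] ℝ) := fun w => π₁ - w • π₂ with hedef
  set ν : ℝ → (ℝ × ℝ →L[ℝ] ℝ) := fun w => -(w • π₂) with hνdef
  have he_apply : ∀ w (q : ℝ × ℝ), e w q = q.1 - w * q.2 := by
    intro w q
    simp [hedef, hπ₁def, hπ₂def]
  have hν_apply : ∀ w (q : ℝ × ℝ), ν w q = -(w * q.2) := by
    intro w q
    simp [hνdef, hπ₂def]
  have he_norm : ∀ w, ‖e w‖ ≤ 1 + |w| := by
    intro w
    refine ContinuousLinearMap.opNorm_le_bound _ (by positivity) fun q => ?_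
    rw [he_apply]
    have h1 : ‖q.1‖ ≤ ‖q‖ := norm_fst_le q
    have h2 : ‖q.2‖ ≤ ‖q‖ := norm_snd_le q
    simp only [Real.norm_eq_abs] at *
    calc |q.1 - w * q.2| ≤ |q.1| + |w * q.2| := abs_sub _ _
    _ = |q.1| + |w| * |q.2| := by rw [abs_mul]
    _ ≤ ‖q‖ + |w| * ‖q‖ := by
        have := abs_nonneg w
        have h2' : |w| * |q.2| ≤ |w| * ‖q‖ := mul_le_mul_of_nonneg_left h2 this
        linarith
    _ = (1 + |w|) * ‖q‖ := by ring
  have hν_norm : ∀ w, ‖ν w‖ ≤ |w| := by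
    intro w
    refine ContinuousLinearMap.opNorm_le_bound _ (abs_nonneg w) fun q => ?_
    rw [hν_apply]
    have h2 : ‖q.2‖ ≤ ‖q‖ := norm_snd_le q
    simp only [Real.norm_eq_abs] at *
    rw [abs_neg, abs_mul]
    exact mul_le_mul_of_nonneg_left h2 (abs_nonneg w)
  have he_cont : Continuous e := continuous_const.sub (continuous_id.smul continuous_const)
  have hν_cont : Continuous ν := (continuous_id.smul continuous_const).neg
  -- derivatives of the affine inner maps
  have hlin1 : ∀ (w : ℝ) (p : ℝ × ℝ), HasFDerivAt (fun q : ℝ × ℝ => q.1 - w * q.2) (e w) p := by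
    intro w p
    have h1 : HasFDerivAt (fun q : ℝ × ℝ => q.1) π₁ p := π₁.hasFDerivAt
    have h2 : HasFDerivAt (fun q : ℝ × ℝ => q.2) π₂ p := π₂.hasFDerivAt
    exact h1.sub (h2.const_mul w)
  have hlin2 : ∀ (w : ℝ) (p : ℝ × ℝ), HasFDerivAt (fun q : ℝ × ℝ => d₁ - w * q.2) (ν w) p := by
    intro w p
    have h2 : HasFDerivAt (fun q : ℝ × ℝ => q.2) π₂ p := π₂.hasFDerivAt
    exact (h2.const_mul w).const_sub d₁
  -- the three integrands
  set g : ℝ × ℝ → ℝ → ℝ :=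
    fun p w => Φ' w * (A2 (p.1 - w * p.2) - A2 (d₁ - w * p.2)) with hgdef
  set L : ℝ × ℝ → ℝ → (ℝ × ℝ →L[ℝ] ℝ) :=
    fun p w => Φ' w • (Ap (p.1 - w * p.2) • e w - Ap (d₁ - w * p.2) • ν w) with hLdef
  set L2 : ℝ × ℝ → ℝ → ((ℝ × ℝ) →L[ℝ] ((ℝ × ℝ) →L[ℝ] ℝ)) :=
    fun p w => Φ' w • ((a (p.1 - w * p.2) • e w).smulRight (e w)
      - (a (d₁ - w * p.2) • ν w).smulRight (ν w)) with hL2def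
  -- fderiv facts
  have hg_fderiv : ∀ (w : ℝ) (p : ℝ × ℝ), HasFDerivAt (fun q => g q w) (L p w) p := by
    intro w p
    have h1 : HasFDerivAt (fun q : ℝ × ℝ => A2 (q.1 - w * q.2))
        (Ap (p.1 - w * p.2) • e w) p :=
      (hA2d _).comp_hasFDerivAt p (hlin1 w p)
    have h2 : HasFDerivAt (fun q : ℝ × ℝ => A2 (d₁ - w * q.2))
        (Ap (d₁ - w * p.2) • ν w) p :=
      (hA2d _).comp_hasFDerivAt p (hlin2 w p)
    exact (h1.sub h2).const_mul (Φ' w)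
  have hL_fderiv : ∀ (w : ℝ) (p : ℝ × ℝ), HasFDerivAt (fun q => L q w) (L2 p w) p := by
    intro w p
    have h1 : HasFDerivAt (fun q : ℝ × ℝ => Ap (q.1 - w * q.2))
        (a (p.1 - w * p.2) • e w) p :=
      (hApd _).comp_hasFDerivAt p (hlin1 w p)
    have h2 : HasFDerivAt (fun q : ℝ × ℝ => Ap (d₁ - w * q.2))
        (a (d₁ - w * p.2) • ν w) p :=
      (hApd _).comp_hasFDerivAt p (hlin2 w p)
    have h1' := h1.smul_const (e w)
    have h2' := h2.smul_const (ν w)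
    exact (h1'.sub h2').const_smul (Φ' w)
  -- norm bounds
  have hLb : ∀ (q : ℝ × ℝ) (w : ℝ), ‖L q w‖ ≤ b w * M := by
    intro q w
    show ‖Φ' w • (Ap (q.1 - w * q.2) • e w - Ap (d₁ - w * q.2) • ν w)‖ ≤ b w * M
    refine le_trans (ContinuousLinearMap.opNorm_smul_le _ _) ?_
    rw [Real.norm_eq_abs]
    have h1 : ‖Ap (q.1 - w * q.2) • e w - Ap (d₁ - w * q.2) • ν w‖
        ≤ M * (1 + |w|) + M * |w| := by
      refine le_trans (norm_sub_le _ _) ?_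
      have ha1 : ‖Ap (q.1 - w * q.2) • e w‖ ≤ M * (1 + |w|) := by
        refine le_trans (ContinuousLinearMap.opNorm_smul_le _ _) ?_
        rw [Real.norm_eq_abs]
        exact mul_le_mul (hApb _) (he_norm w) (norm_nonneg _) hM0
      have ha2 : ‖Ap (d₁ - w * q.2) • ν w‖ ≤ M * |w| := by
        refine le_trans (ContinuousLinearMap.opNorm_smul_le _ _) ?_
        rw [Real.norm_eq_abs]
        exact mul_le_mul (hApb _) (hν_norm w) (norm_nonneg _) hM0
      linarith
    refine le_trans (mul_le_mul_of_nonneg_left h1 (abs_nonneg (Φ' w))) ?_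
    have hb_eq : b w = |Φ' w| * (2 * (1 + |w|) ^ 2) := rfl
    rw [hb_eq]
    have hkey2 : M * (1 + |w|) + M * |w| ≤ 2 * (1 + |w|) ^ 2 * M := by
      nlinarith [abs_nonneg w, hM0, mul_nonneg hM0 (abs_nonneg w),
        mul_nonneg hM0 (sq_nonneg |w|)]
    calc |Φ' w| * (M * (1 + |w|) + M * |w|)
        ≤ |Φ' w| * (2 * (1 + |w|) ^ 2 * M) :=
          mul_le_mul_of_nonneg_left hkey2 (abs_nonneg _)
    _ = |Φ' w| * (2 * (1 + |w|) ^ 2) * M := by ring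
  have hL2b : ∀ (q : ℝ × ℝ) (w : ℝ), ‖L2 q w‖ ≤ b w * A := by
    intro q w
    show ‖Φ' w • ((a (q.1 - w * q.2) • e w).smulRight (e w)
      - (a (d₁ - w * q.2) • ν w).smulRight (ν w))‖ ≤ b w * A
    refine le_trans (ContinuousLinearMap.opNorm_smul_le _ _) ?_
    rw [Real.norm_eq_abs]
    have h1 : ‖(a (q.1 - w * q.2) • e w).smulRight (e w)
        - (a (d₁ - w * q.2) • ν w).smulRight (ν w)‖
        ≤ A * (1 + |w|) * (1 + |w|) + A * |w| * |w| := by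
      refine le_trans (@norm_sub_le ((ℝ × ℝ) →L[ℝ] ((ℝ × ℝ) →L[ℝ] ℝ)) _ _ _) ?_
      have hee : ‖a (q.1 - w * q.2) • e w‖ ≤ A * (1 + |w|) := by
        refine le_trans (ContinuousLinearMap.opNorm_smul_le _ _) ?_
        rw [Real.norm_eq_abs]
        exact mul_le_mul (hA _) (he_norm w) (norm_nonneg _) hA0
      have hνν : ‖a (d₁ - w * q.2) • ν w‖ ≤ A * |w| := by
        refine le_trans (ContinuousLinearMap.opNorm_smul_le _ _) ?_
        rw [Real.norm_eq_abs]
        exact mul_le_mul (hA _) (hν_norm w) (norm_nonneg _) hA0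
      have ha1 : ‖(a (q.1 - w * q.2) • e w).smulRight (e w)‖ ≤ A * (1 + |w|) * (1 + |w|) := by
        rw [ContinuousLinearMap.norm_smulRight_apply]
        exact mul_le_mul hee (he_norm w) (norm_nonneg _) (by positivity)
      have ha2 : ‖(a (d₁ - w * q.2) • ν w).smulRight (ν w)‖ ≤ A * |w| * |w| := by
        rw [ContinuousLinearMap.norm_smulRight_apply]
        exact mul_le_mul hνν (hν_norm w) (norm_nonneg _) (by positivity)
      linarith
    refine le_trans (mul_le_mul_of_nonneg_left h1 (abs_nonneg (Φ' w))) ?_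
    have hb_eq : b w = |Φ' w| * (2 * (1 + |w|) ^ 2) := rfl
    rw [hb_eq]
    have hkey2 : A * (1 + |w|) * (1 + |w|) + A * |w| * |w| ≤ 2 * (1 + |w|) ^ 2 * A := by
      nlinarith [abs_nonneg w, hA0, mul_nonneg hA0 (abs_nonneg w),
        mul_nonneg hA0 (sq_nonneg |w|)]
    calc |Φ' w| * (A * (1 + |w|) * (1 + |w|) + A * |w| * |w|)
        ≤ |Φ' w| * (2 * (1 + |w|) ^ 2 * A) :=
          mul_le_mul_of_nonneg_left hkey2 (abs_nonneg _)
    _ = |Φ' w| * (2 * (1 + |w|) ^ 2) * A := by ring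
  -- continuity in w
  have hg_cont_w : ∀ p : ℝ × ℝ, Continuous (fun w => g p w) := by
    intro p
    show Continuous fun w => Φ' w * (A2 (p.1 - w * p.2) - A2 (d₁ - w * p.2))
    apply hΦ'c.mul
    exact (hA2c.comp (by fun_prop)).sub (hA2c.comp (by fun_prop))
  have hsmulRight_cont : ∀ {X : Type} [TopologicalSpace X]
      (c v : X → ((ℝ × ℝ) →L[ℝ] ℝ)), Continuous c → Continuous v →
      Continuous (fun x => (c x).smulRight (v x)) := by
    intro X _ c v hc hv
    have h1 : Continuous fun x =>
        ContinuousLinearMap.smulRightL ℝ (ℝ × ℝ) ((ℝ × ℝ) →L[ℝ] ℝ) (c x) :=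
      (ContinuousLinearMap.smulRightL ℝ (ℝ × ℝ) ((ℝ × ℝ) →L[ℝ] ℝ)).continuous.comp hc
    exact h1.clm_apply hv
  have hL_cont_w : ∀ p : ℝ × ℝ, Continuous (fun w => L p w) := by
    intro p
    show Continuous fun w => Φ' w • (Ap (p.1 - w * p.2) • e w - Ap (d₁ - w * p.2) • ν w)
    apply hΦ'c.smul
    exact ((hApc.comp (by fun_prop)).smul he_cont).sub ((hApc.comp (by fun_prop)).smul hν_cont)
  have hL2_cont_w : ∀ p : ℝ × ℝ, Continuous (fun w => L2 p w) := by
    intro p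
    show Continuous fun w => Φ' w • ((a (p.1 - w * p.2) • e w).smulRight (e w)
      - (a (d₁ - w * p.2) • ν w).smulRight (ν w))
    haveI : ContinuousSub ((ℝ × ℝ) →L[ℝ] ((ℝ × ℝ) →L[ℝ] ℝ)) :=
      @IsTopologicalAddGroup.to_continuousSub ((ℝ × ℝ) →L[ℝ] ((ℝ × ℝ) →L[ℝ] ℝ)) _ _ _
    apply hΦ'c.smul
    refine Continuous.sub (f := fun w => (a (p.1 - w * p.2) • e w).smulRight (e w))
      (g := fun w => (a (d₁ - w * p.2) • ν w).smulRight (ν w)) ?_ ?_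
    · exact hsmulRight_cont _ _ ((ha.comp (by fun_prop)).smul he_cont) he_cont
    · exact hsmulRight_cont _ _ ((ha.comp (by fun_prop)).smul hν_cont) hν_cont
  have hL2_cont_p : ∀ w : ℝ, Continuous (fun p : ℝ × ℝ => L2 p w) := by
    intro w
    show Continuous fun p : ℝ × ℝ => Φ' w • ((a (p.1 - w * p.2) • e w).smulRight (e w)
      - (a (d₁ - w * p.2) • ν w).smulRight (ν w))
    haveI : ContinuousSub ((ℝ × ℝ) →L[ℝ] ((ℝ × ℝ) →L[ℝ] ℝ)) :=
      @IsTopologicalAddGroup.to_continuousSub ((ℝ × ℝ) →L[ℝ] ((ℝ × ℝ) →L[ℝ] ℝ)) _ _ _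
    apply (continuous_const (y := Φ' w)).smul
    refine Continuous.sub (f := fun p : ℝ × ℝ => (a (p.1 - w * p.2) • e w).smulRight (e w))
      (g := fun p : ℝ × ℝ => (a (d₁ - w * p.2) • ν w).smulRight (ν w)) ?_ ?_
    · exact hsmulRight_cont _ _ ((ha.comp (by fun_prop)).smul continuous_const) continuous_const
    · exact hsmulRight_cont _ _ ((ha.comp (by fun_prop)).smul continuous_const) continuous_const
  -- compact support / integrability
  have hg_int : ∀ p : ℝ × ℝ, Integrable (fun w => g p w) := by
    intro p
    refine (hg_cont_w p).integrable_of_hasCompactSupport ?_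
    show HasCompactSupport fun w => Φ' w * (A2 (p.1 - w * p.2) - A2 (d₁ - w * p.2))
    exact hΦ'CS.mul_right
  have hL_int : ∀ p : ℝ × ℝ, Integrable (fun w => L p w) := by
    intro p
    refine (hL_cont_w p).integrable_of_hasCompactSupport ?_
    show HasCompactSupport fun w => Φ' w • (Ap (p.1 - w * p.2) • e w - Ap (d₁ - w * p.2) • ν w)
    exact hΦ'CS.smul_right
  -- integration by parts lemma
  have hibp : ∀ (f f' : ℝ → ℝ), (∀ t, HasDerivAt f (f' t) t) → Continuous f' →
      ∀ (η c : ℝ), (∫ w, Φ' w * f (c - w * η)) = η * ∫ w, Φ w * f' (c - w * η) := by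
    intro f f' hf hf'c η c
    have hfc : Continuous f := continuous_iff_continuousAt.2 fun t => (hf t).continuousAt
    have hsupp1 : Function.support (fun w => Φ' w * f (c - w * η)) ⊆ Ioc (-2 : ℝ) 2 := by
      intro w hw
      by_contra hmem
      apply hw
      have : Φ' w = 0 := by
        apply hΦ'zero
        intro hIcc
        apply hmem
        constructor <;> [linarith [hIcc.1]; linarith [hIcc.2]]
      simp [this]
    have hsupp2 : Function.support (fun w => Φ w * f' (c - w * η)) ⊆ Ioc (-2 : ℝ) 2 := by
      intro w hw
      by_contra hmem
      apply hw
      have : Φ w = 0 := by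
        apply hΦzero
        intro hIoo
        apply hmem
        constructor <;> [linarith [hIoo.1]; linarith [hIoo.2]]
      simp [this]
    rw [← intervalIntegral.integral_eq_integral_of_support_subset hsupp1,
        ← intervalIntegral.integral_eq_integral_of_support_subset hsupp2]
    have hv : ∀ x ∈ uIcc (-2:ℝ) 2, HasDerivAt (fun w => f (c - w * η)) (f' (c - x * η) * (-η)) x := by
      intro x _
      have hinner : HasDerivAt (fun w : ℝ => c - w * η) (-η) x := by
        simpa using ((hasDerivAt_id x).mul_const η).const_sub c
      exact (hf (c - x * η)).comp x hinner
    have hu : ∀ x ∈ uIcc (-2:ℝ) 2, HasDerivAt Φ (Φ' x) x := fun x _ => hΦd x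
    have hIBP := intervalIntegral.integral_mul_deriv_eq_deriv_mul hu hv
      (hΦ'c.intervalIntegrable _ _)
      (((hf'c.comp (by fun_prop)).mul continuous_const).intervalIntegrable _ _)
    have hb2 : Φ (2:ℝ) = 0 := hΦzero 2 (by norm_num)
    have hbm2 : Φ (-2:ℝ) = 0 := hΦzero (-2) (by norm_num)
    rw [hb2, hbm2] at hIBP
    simp only [zero_mul, sub_zero, zero_sub] at hIBP
    have hrw : (∫ x in (-2:ℝ)..2, Φ x * (f' (c - x * η) * (-η)))
        = -η * ∫ x in (-2:ℝ)..2, Φ x * f' (c - x * η) := by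
      rw [← intervalIntegral.integral_const_mul]
      apply intervalIntegral.integral_congr
      intro x _
      ring
    rw [hrw] at hIBP
    linarith [hIBP]
  -- the key identity
  have hkey : ∀ (η u : ℝ),
      η * (∫ x in d₁..u, ∫ w : ℝ, Φ w * a (x - w * η)) = ∫ w, g (u, η) w := by
    intro η
    have hΦabsA : Integrable (fun w => |Φ w| * A) := hΦInt.abs.mul_const A
    have hinner_c : Continuous fun x : ℝ => ∫ w : ℝ, Φ w * a (x - w * η) := by
      apply continuous_of_dominated (bound := fun w => |Φ w| * A)
      · intro x
        exact (hΦc.mul (ha.comp (by fun_prop))).aestronglyMeasurable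
      · intro x
        filter_upwards with w
        rw [Real.norm_eq_abs, abs_mul]
        exact mul_le_mul_of_nonneg_left (hA _) (abs_nonneg _)
      · exact hΦabsA
      · filter_upwards with w
        exact continuous_const.mul (ha.comp (by fun_prop))
    set LF : ℝ → ℝ := fun u => η * ∫ x in d₁..u, ∫ w : ℝ, Φ w * a (x - w * η) with hLFdef
    set RF : ℝ → ℝ := fun u => ∫ w, g (u, η) w with hRFdef
    have hLd : ∀ u, HasDerivAt LF (η * ∫ w : ℝ, Φ w * a (u - w * η)) u := by
      intro u
      exact (intervalIntegral.integral_hasDerivAt_right (hinner_c.intervalIntegrable _ _)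
        hinner_c.stronglyMeasurable.stronglyMeasurableAtFilter
        hinner_c.continuousAt).const_mul η
    have hRd : ∀ u, HasDerivAt RF (∫ w : ℝ, Φ' w * Ap (u - w * η)) u := by
      intro u
      have hres := _root_.hasDerivAt_integral_of_dominated_loc_of_deriv_le
        (μ := volume)
        (F := fun u w => g (u, η) w) (F' := fun u w => Φ' w * Ap (u - w * η))
        (bound := fun w => |Φ' w| * M) (x₀ := u) (Metric.ball_mem_nhds u one_pos)
        ?_ ?_ ?_ ?_ ?_ ?_
      · exact hres.2
      · filter_upwards with x
        exact (hg_cont_w (x, η)).aestronglyMeasurable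
      · exact hg_int (u, η)
      · exact (hΦ'c.mul (hApc.comp (by fun_prop))).aestronglyMeasurable
      · filter_upwards with w
        intro x _
        rw [Real.norm_eq_abs, abs_mul]
        exact mul_le_mul_of_nonneg_left (hApb _) (abs_nonneg _)
      · exact hΦ'Int.abs.mul_const M
      · filter_upwards with w
        intro x _
        have hinner : HasDerivAt (fun u : ℝ => u - w * η) 1 u → True := fun _ => trivial
        have hin : HasDerivAt (fun x : ℝ => x - w * η) 1 x := by
          simpa using (hasDerivAt_id x).sub_const (w * η)
        have h1 : HasDerivAt (fun x : ℝ => A2 (x - w * η)) (Ap (x - w * η)) x := by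
          have h := (hA2d (x - w * η)).comp x hin; rw [mul_one] at h; exact h
        have h2 : HasDerivAt (fun x : ℝ => A2 (x - w * η) - A2 (d₁ - w * η))
            (Ap (x - w * η)) x := by
          simpa using h1.sub_const (A2 (d₁ - w * η))
        exact h2.const_mul (Φ' w)
    have hderiv_eq : ∀ u : ℝ,
        (∫ w : ℝ, Φ' w * Ap (u - w * η)) = η * ∫ w : ℝ, Φ w * a (u - w * η) :=
      fun u => hibp Ap a hApd ha η u
    have hdiff : ∀ x : ℝ, HasDerivAt (fun u => RF u - LF u) 0 x := by
      intro x
      have h := (hRd x).sub (hLd x)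
      rw [hderiv_eq x, sub_self] at h
      exact h
    have hconst := is_const_of_deriv_eq_zero (𝕜 := ℝ)
      (fun x => (hdiff x).differentiableAt) (fun x => (hdiff x).deriv)
    intro u
    have h0 : RF d₁ - LF d₁ = 0 := by
      rw [hRFdef, hLFdef]
      simp [hgdef]
    have hu0 : RF u - LF u = RF d₁ - LF d₁ := hconst u d₁
    have hfin : LF u = RF u := by rw [h0] at hu0; linarith
    exact hfin
  -- rewrite Q
  have hQeq : (fun p : ℝ × ℝ => p.2 * ∫ x in d₁..p.1, ∫ w : ℝ, Φ w * a (x - w * p.2))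
      = fun p : ℝ × ℝ => ∫ w, g p w := funext fun p => hkey p.2 p.1
  rw [hQeq]
  -- the two fderiv-under-integral facts
  have hQd1 : ∀ p : ℝ × ℝ, HasFDerivAt (fun q : ℝ × ℝ => ∫ w, g q w) (∫ w, L p w) p := by
    intro p
    apply _root_.hasFDerivAt_integral_of_dominated_of_fderiv_le (bound := fun w => b w * M)
      (F' := L) (Metric.ball_mem_nhds p one_pos)
    · filter_upwards with q
      exact (hg_cont_w q).aestronglyMeasurable
    · exact hg_int p
    · exact (hL_cont_w p).aestronglyMeasurable
    · filter_upwards with w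
      intro q _
      exact hLb q w
    · exact hbInt.mul_const M
    · filter_upwards with w
      intro q _
      exact hg_fderiv w q
  set Q1 : ℝ × ℝ → (ℝ × ℝ →L[ℝ] ℝ) := fun p => ∫ w, L p w with hQ1def
  have hQd2 : ∀ p : ℝ × ℝ, HasFDerivAt Q1 (∫ w, L2 p w) p := by
    intro p
    apply _root_.hasFDerivAt_integral_of_dominated_of_fderiv_le (bound := fun w => b w * A)
      (F' := L2) (Metric.ball_mem_nhds p one_pos)
    · filter_upwards with q
      exact (hL_cont_w q).aestronglyMeasurable
    · exact hL_int p
    · exact (hL2_cont_w p).aestronglyMeasurable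
    · filter_upwards with w
      intro q _
      exact hL2b q w
    · exact hbInt.mul_const A
    · filter_upwards with w
      intro q _
      exact hL_fderiv w q
  have hfQ : fderiv ℝ (fun q : ℝ × ℝ => ∫ w, g q w) = Q1 :=
    funext fun p => (hQd1 p).fderiv
  have hfQ1 : fderiv ℝ Q1 = fun p => ∫ w, L2 p w :=
    funext fun p => (hQd2 p).fderiv
  have hcont2 : Continuous fun p : ℝ × ℝ => ∫ w, L2 p w := by
    apply continuous_of_dominated (bound := fun w => b w * A)
    · intro q
      exact (hL2_cont_w q).aestronglyMeasurable
    · intro q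
      filter_upwards with w
      exact hL2b q w
    · exact hbInt.mul_const A
    · filter_upwards with w
      exact hL2_cont_p w
  constructor
  · rw [show (2 : WithTop ℕ∞) = 1 + 1 from rfl, contDiff_succ_iff_fderiv]
    refine ⟨fun p => (hQd1 p).differentiableAt, by simp, ?_⟩
    rw [hfQ, contDiff_one_iff_fderiv]
    refine ⟨fun p => (hQd2 p).differentiableAt, ?_⟩
    rw [hfQ1]
    exact hcont2
  · intro p hp k hk
    have habs : (0:ℝ) ≤ |d₁| := abs_nonneg d₁
    have hdd : (0:ℝ) ≤ d₂ - d₁ := by linarith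
    have hbase : 0 ≤ Ib * (d₂ - d₁) := mul_nonneg hIb0 hdd
    have hfac : (0:ℝ) ≤ R + |d₁| + 1 := by linarith
    have hCterm : 0 ≤ Ib * (d₂ - d₁) * (R + |d₁| + 1) := mul_nonneg hbase hfac
    have hC1 : Ib * M ≤ (Ib * (d₂ - d₁) * (R + |d₁| + 1) + Ib + 1) * A := by
      have h2 : Ib * (d₂ - d₁) ≤ Ib * (d₂ - d₁) * (R + |d₁| + 1) :=
        le_mul_of_one_le_right hbase (by linarith)
      calc Ib * M = (Ib * (d₂ - d₁)) * A := by rw [hMdef]; ring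
      _ ≤ (Ib * (d₂ - d₁) * (R + |d₁| + 1)) * A := mul_le_mul_of_nonneg_right h2 hA0
      _ ≤ (Ib * (d₂ - d₁) * (R + |d₁| + 1) + Ib + 1) * A := by
          apply mul_le_mul_of_nonneg_right _ hA0
          linarith
    have hC2 : Ib * A ≤ (Ib * (d₂ - d₁) * (R + |d₁| + 1) + Ib + 1) * A := by
      apply mul_le_mul_of_nonneg_right _ hA0
      linarith
    interval_cases k
    · -- k = 0
      rw [norm_iteratedFDeriv_zero]
      have hb0 : ∀ w, ‖g p w‖ ≤ b w * ((R + |d₁|) * M) := by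
        intro w
        show ‖Φ' w * (A2 (p.1 - w * p.2) - A2 (d₁ - w * p.2))‖ ≤ b w * ((R + |d₁|) * M)
        rw [Real.norm_eq_abs, abs_mul]
        have harg : (p.1 - w * p.2) - (d₁ - w * p.2) = p.1 - d₁ := by ring
        have h1 : |A2 (p.1 - w * p.2) - A2 (d₁ - w * p.2)| ≤ (R + |d₁|) * M := by
          refine le_trans (hA2diff _ _) ?_
          rw [harg]
          have h2 : |p.1 - d₁| ≤ R + |d₁| := by
            have h3 : |p.1| ≤ ‖p‖ := by
              simpa [Real.norm_eq_abs] using norm_fst_le p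
            have h4 := hRV p hp
            calc |p.1 - d₁| ≤ |p.1| + |d₁| := abs_sub _ _
            _ ≤ R + |d₁| := by linarith
          exact mul_le_mul_of_nonneg_right h2 hM0
        refine le_trans (mul_le_mul_of_nonneg_left h1 (abs_nonneg (Φ' w))) ?_
        refine mul_le_mul_of_nonneg_right (hΦ'le_b w) ?_
        have h5 : (0:ℝ) ≤ R + |d₁| := by positivity
        exact mul_nonneg h5 hM0
      have hle := norm_integral_le_of_norm_le (hbInt.mul_const ((R + |d₁|) * M))
        (Filter.Eventually.of_forall hb0)
      rw [MeasureTheory.integral_mul_const] at hle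
      refine le_trans hle ?_
      have h2 : Ib * ((R + |d₁|) * (d₂ - d₁)) ≤ Ib * (d₂ - d₁) * (R + |d₁| + 1) := by
        have h3 : (R + |d₁|) ≤ R + |d₁| + 1 := by linarith
        calc Ib * ((R + |d₁|) * (d₂ - d₁)) = Ib * (d₂ - d₁) * (R + |d₁|) := by ring
        _ ≤ Ib * (d₂ - d₁) * (R + |d₁| + 1) := mul_le_mul_of_nonneg_left h3 hbase
      calc Ib * ((R + |d₁|) * M) = (Ib * ((R + |d₁|) * (d₂ - d₁))) * A := by rw [hMdef]; ring
      _ ≤ (Ib * (d₂ - d₁) * (R + |d₁| + 1)) * A := mul_le_mul_of_nonneg_right h2 hA0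
      _ ≤ (Ib * (d₂ - d₁) * (R + |d₁| + 1) + Ib + 1) * A := by
          apply mul_le_mul_of_nonneg_right _ hA0
          linarith
    · -- k = 1
      have e1 : ‖iteratedFDeriv ℝ 1 (fun q : ℝ × ℝ => ∫ w, g q w) p‖
          = ‖fderiv ℝ (fun q : ℝ × ℝ => ∫ w, g q w) p‖ := by
        rw [show (1:ℕ) = 0 + 1 from rfl, ← norm_iteratedFDeriv_fderiv,
          norm_iteratedFDeriv_zero]
      rw [e1, hfQ]
      have hle := norm_integral_le_of_norm_le (hbInt.mul_const M)
        (Filter.Eventually.of_forall (fun w => hLb p w))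
      rw [MeasureTheory.integral_mul_const] at hle
      exact le_trans hle hC1
    · -- k = 2
      have e2 : ‖iteratedFDeriv ℝ 2 (fun q : ℝ × ℝ => ∫ w, g q w) p‖
          = ‖fderiv ℝ (fderiv ℝ (fun q : ℝ × ℝ => ∫ w, g q w)) p‖ := by
        rw [show (2:ℕ) = 1 + 1 from rfl, ← norm_iteratedFDeriv_fderiv,
          show (1:ℕ) = 0 + 1 from rfl, ← norm_iteratedFDeriv_fderiv,
          norm_iteratedFDeriv_zero]
      rw [e2, hfQ, hfQ1]
      have hle := norm_integral_le_of_norm_le (f := fun w => L2 p w)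
        (hbInt.mul_const A) (Filter.Eventually.of_forall (fun w => hL2b p w))
      rw [MeasureTheory.integral_mul_const] at hle
      exact le_trans hle hC2
end
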